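/- The restriction of the spectrum map χ to any single orbit of the sorting action of S(r) on Walk_r(ρ,σ) is injective, and its image is the corresponding orbit of S(r) acting on {2,…,d}^r by permuting coordinates. -/

import Mathlib

/-! The sorting operator `R_i` swaps the colours in positions `i, i+1`, so checking on
adjacent transpositions (which generate `S(r)`) gives `χ(π · W) = χ(W) ∘ π⁻¹`; this
equivariance yields the image. For injectivity it then suffices that the stabiliser of
`χ(W)` fixes `W`. That stabiliser is generated by the transpositions `(j k)` with equal
colours at `j` and `k`; each of these is conjugate to `(0 1)`, and conjugating moves the
two equal colours to positions `0, 1`, where `R_0` acts trivially. -/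

/-- A transposition step `(s t)` of `S(d)` recorded with `s < t`; its colour is `t`. -/
def Step (d : ℕ) : Type := {p : Fin d × Fin d // p.1 < p.2}

/-- The permutation (transposition) corresponding to a step. -/
def stepPerm {d : ℕ} (x : Step d) : Equiv.Perm (Fin d) := Equiv.swap x.1.1 x.1.2

/-- The colour of a step, i.e. the larger of the two interchanged points. -/
def colour {d : ℕ} (x : Step d) : Fin d := x.1.2

/-- The product of a tuple of steps, taken in order. -/
def stepProd {d r : ℕ} (W : Fin r → Step d) : Equiv.Perm (Fin d) :=
  (List.ofFn fun j => stepPerm (W j)).prod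

/-- Conjugation of the step `x` by the step `c`, recorded again as a step. -/
def conjStep {d : ℕ} (c x : Step d) : Step d :=
  if h : stepPerm c x.1.1 < stepPerm c x.1.2 then
    ⟨(stepPerm c x.1.1, stepPerm c x.1.2), h⟩
  else
    ⟨(stepPerm c x.1.2, stepPerm c x.1.1),
      lt_of_le_of_ne (not_lt.mp h)
        (fun he => absurd ((stepPerm c).injective he) (ne_of_gt x.2))⟩

/-- The sorting operator `R_i`: swap steps `i` and `i+1`, conjugating the step of
larger colour by the step of smaller colour; do nothing if the colours agree. -/
def Rop {d r : ℕ} (i : ℕ) (h : i + 1 < r) (W : Fin r → Step d) : Fin r → Step d :=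
  let i0 : Fin r := ⟨i, Nat.lt_of_succ_lt h⟩
  let i1 : Fin r := ⟨i + 1, h⟩
  let a := W i0
  let b := W i1
  if colour a < colour b then
    Function.update (Function.update W i0 (conjStep a b)) i1 a
  else if colour b < colour a then
    Function.update (Function.update W i0 b) i1 (conjStep b a)
  else W

/-- The set of `r`-step walks on the transposition Cayley graph of `S(d)` from
`ρ` to `σ`, encoded as tuples of steps with `ρ * (product of steps) = σ`. -/
def Walk (d r : ℕ) (ρ σ : Equiv.Perm (Fin d)) : Type :=
  {W : Fin r → Step d // ρ * stepProd W = σ}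

/-- The spectrum of a walk: the sequence of colours of its steps. -/
def spec {d r : ℕ} {ρ σ : Equiv.Perm (Fin d)} (W : Walk d r ρ σ) : Fin r → Fin d :=
  fun j => colour (W.val j)

/-- The generator condition characterizing the sorting action: the homomorphism
`R : S(r) → Aut(Walk_r(ρ,σ))` sends each Coxeter generator `(i i+1)` to `R_i`. -/
def IsSortingAction {d r : ℕ} {ρ σ : Equiv.Perm (Fin d)}
    (R : Equiv.Perm (Fin r) →* Equiv.Perm (Walk d r ρ σ)) : Prop :=
  ∀ (i : ℕ) (h : i + 1 < r) (W : Walk d r ρ σ),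
    (R (Equiv.swap (⟨i, Nat.lt_of_succ_lt h⟩ : Fin r) (⟨i + 1, h⟩ : Fin r)) W).val
      = Rop i h W.val

open Equiv

theorem Equiv.comp_swap_eq_self {α β : Type*} [DecidableEq α] {f : α → β} {j k : α}
    (h : f j = f k) : f ∘ swap j k = f := by
  ext l
  simp only [Function.comp_apply, swap_apply_def]
  split_ifs <;> simp_all

/-- The stabiliser of `f` under precomposition is generated by the transpositions of points
with equal values. -/
theorem Equiv.Perm.induction_on_comp_eq_self {α β : Type*} [Fintype α] [DecidableEq α]
    {f : α → β} {P : Perm α → Prop} (one : P 1)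
    (swap_mul : ∀ π j k, j ≠ k → f j = f k → P π → P (swap j k * π)) :
    ∀ π : Perm α, f ∘ π = f → P π := by
  intro π hπ
  induction hn : π.support.card using Nat.strong_induction_on generalizing π with
  | _ n ih =>
  by_cases h1 : π = 1
  · exact h1 ▸ one
  obtain ⟨j, hj⟩ : ∃ j, π j ≠ j := not_forall.mp fun h => h1 (Equiv.ext h)
  have hf : f j = f (π j) := (congrFun hπ j).symm
  have hτπ : f ∘ ⇑(swap j (π j) * π) = f := by
    rw [Perm.coe_mul, ← Function.comp_assoc, comp_swap_eq_self hf, hπ]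
  have := swap_mul _ j (π j) hj.symm hf (ih _ (hn ▸ Perm.card_support_swap_mul hj) _ hτπ rfl)
  rwa [← mul_assoc, swap_mul_self, one_mul] at this

variable {d r : ℕ} {ρ σ : Perm (Fin d)}

theorem colour_conjStep {c x : Step d} (h : colour c < colour x) :
    colour (conjStep c x) = colour x := by
  have hfix : stepPerm c x.1.2 = x.1.2 :=
    swap_apply_of_ne_of_ne (lt_trans c.2 h).ne' h.ne'
  have hlt : stepPerm c x.1.1 < stepPerm c x.1.2 := by
    rw [hfix]
    simp only [stepPerm, swap_apply_def]
    split_ifs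
    exacts [h, lt_trans c.2 h, x.2]
  rw [show conjStep c x = ⟨_, hlt⟩ from dif_pos hlt]
  exact hfix

theorem colour_comp_Rop (i : ℕ) (h : i + 1 < r) (W : Fin r → Step d) :
    colour ∘ Rop i h W = colour ∘ W ∘ swap ⟨i, Nat.lt_of_succ_lt h⟩ ⟨i + 1, h⟩ := by
  have hne : (⟨i, Nat.lt_of_succ_lt h⟩ : Fin r) ≠ ⟨i + 1, h⟩ := by simp [Fin.ext_iff]
  rw [← Function.comp_assoc]
  simp only [Rop]
  split_ifs with hab hba
  · rw [comp_swap_eq_update, Function.comp_update, Function.comp_update, colour_conjStep hab,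
      Function.update_comm hne.symm]
    rfl
  · rw [comp_swap_eq_update, Function.comp_update, Function.comp_update, colour_conjStep hba,
      Function.update_comm hne.symm]
    rfl
  · exact (comp_swap_eq_self (f := colour ∘ W) (le_antisymm (not_lt.1 hba) (not_lt.1 hab))).symm

theorem Rop_eq_self (i : ℕ) (h : i + 1 < r) (W : Fin r → Step d)
    (hc : colour (W ⟨i, Nat.lt_of_succ_lt h⟩) = colour (W ⟨i + 1, h⟩)) :
    Rop i h W = W := by
  simp only [Rop, hc, lt_irrefl, if_false]

section SortingAction

variable {R : Perm (Fin r) →* Perm (Walk d r ρ σ)}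

theorem IsSortingAction.spec_adjSwap (hR : IsSortingAction R) (i : ℕ) (h : i + 1 < r)
    (W : Walk d r ρ σ) :
    spec (R (swap ⟨i, Nat.lt_of_succ_lt h⟩ ⟨i + 1, h⟩) W) =
      spec W ∘ swap ⟨i, Nat.lt_of_succ_lt h⟩ ⟨i + 1, h⟩ := by
  change colour ∘ (R _ W).val = _
  rw [hR, colour_comp_Rop]
  rfl

theorem IsSortingAction.adjSwap_eq_self (hR : IsSortingAction R) (i : ℕ) (h : i + 1 < r)
    (W : Walk d r ρ σ) (hc : spec W ⟨i, Nat.lt_of_succ_lt h⟩ = spec W ⟨i + 1, h⟩) :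
    R (swap ⟨i, Nat.lt_of_succ_lt h⟩ ⟨i + 1, h⟩) W = W :=
  Subtype.ext ((hR i h W).trans (Rop_eq_self i h W.val hc))

theorem IsSortingAction.spec_apply (hR : IsSortingAction R) (π : Perm (Fin r))
    (W : Walk d r ρ σ) : spec (R π W) = spec W ∘ ⇑π⁻¹ := by
  cases r with
  | zero => rw [Subsingleton.elim π 1, map_one, inv_one]; rfl
  | succ n =>
    have hπ : π ∈ Submonoid.closure (Set.range fun i : Fin n ↦ swap i.castSucc i.succ) := by
      rw [Perm.mclosure_swap_castSucc_succ]; trivial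
    induction hπ using Submonoid.closure_induction generalizing W with
    | mem _ hs =>
      obtain ⟨i, rfl⟩ := hs
      rw [swap_inv]
      exact hR.spec_adjSwap i (by omega) W
    | one => rw [map_one, inv_one]; rfl
    | mul a b _ _ iha ihb =>
      rw [map_mul, Perm.mul_apply, iha, ihb, mul_inv_rev, Perm.coe_mul, Function.comp_assoc]

theorem IsSortingAction.swap_eq_self (hR : IsSortingAction R) {j k : Fin r} (hjk : j ≠ k)
    (W : Walk d r ρ σ) (hc : spec W j = spec W k) : R (swap j k) W = W := by
  have h : 0 + 1 < r := by have := Fin.val_ne_of_ne hjk; omega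
  set s : Perm (Fin r) := swap ⟨0, Nat.lt_of_succ_lt h⟩ ⟨0 + 1, h⟩
  obtain ⟨g, hg⟩ : ∃ g, g * swap j k * g⁻¹ = s :=
    isConj_iff.mp (Perm.isConj_swap hjk (by simp [Fin.ext_iff]))
  have hjk_eq : swap j k = g⁻¹ * s * g := by rw [← hg]; group
  -- `R g W` carries the equal colours of positions `j, k` at positions `0, 1`
  have hgW : R s (R g W) = R g W := by
    refine hR.adjSwap_eq_self 0 h _ ?_
    have := congrFun (comp_swap_eq_self hc) (g⁻¹ ⟨0, Nat.lt_of_succ_lt h⟩)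
    rw [hjk_eq] at this
    simpa [hR.spec_apply, s] using this.symm
  rw [hjk_eq, map_mul, map_mul, Perm.mul_apply, Perm.mul_apply, hgW, ← Perm.mul_apply,
    ← map_mul, inv_mul_cancel, map_one, Perm.one_apply]

theorem IsSortingAction.eq_self_of_spec_comp_eq (hR : IsSortingAction R) (π : Perm (Fin r))
    (W : Walk d r ρ σ) (hπ : spec W ∘ π = spec W) : R π W = W :=
  Perm.induction_on_comp_eq_self (P := fun π => R π W = W) (by rw [map_one]; rfl)
    (fun π j k hjk hc hπW => by rw [map_mul, Perm.mul_apply, hπW, hR.swap_eq_self hjk W hc]) π hπ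

end SortingAction

/-- The spectrum map `χ` is injective on every orbit of the sorting action, and
its image on the orbit of `W` is the orbit of the spectrum of `W` under the
action of `S(r)` permuting coordinates. -/
theorem stmt9 (d r : ℕ) (ρ σ : Equiv.Perm (Fin d))
    (R : Equiv.Perm (Fin r) →* Equiv.Perm (Walk d r ρ σ)) (hR : IsSortingAction R)
    (W : Walk d r ρ σ) :
    (∀ π₁ π₂ : Equiv.Perm (Fin r),
      spec (R π₁ W) = spec (R π₂ W) → R π₁ W = R π₂ W) ∧
    (Set.range fun π : Equiv.Perm (Fin r) => spec (R π W)) =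
      (Set.range fun π : Equiv.Perm (Fin r) => spec W ∘ π) := by
  refine ⟨fun π₁ π₂ h => ?_, ?_⟩
  · have hfix : R (π₁⁻¹ * π₂) W = W := by
      refine hR.eq_self_of_spec_comp_eq _ W ?_
      rw [hR.spec_apply, hR.spec_apply] at h
      rw [Perm.coe_mul, ← Function.comp_assoc, h, Function.comp_assoc, ← Perm.coe_mul,
        inv_mul_cancel, Perm.coe_one, Function.comp_id]
    calc R π₁ W = R π₁ (R (π₁⁻¹ * π₂) W) := by rw [hfix]
      _ = R π₂ W := by rw [← Perm.mul_apply, ← map_mul, mul_inv_cancel_left]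
  · ext f
    constructor
    · rintro ⟨π, rfl⟩
      exact ⟨π⁻¹, (hR.spec_apply π W).symm⟩
    · rintro ⟨π, rfl⟩
      exact ⟨π⁻¹, by simp only [hR.spec_apply, inv_inv]⟩
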